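/- arXiv:0904.4676 — 4 statements merged into one kernel-verified Lean document; each statement's English description precedes it below -/
import Mathlib

section
/- Define Q(y) = U_n''(y)/(U_n(y) − U_n(1/2)) = −16π²nA·sin(4nπy)/(y − 1/2 + (A/n)·sin(4nπy)). Then for y' = y − 1/2 with |y'| ≤ 1/(8n) and y' ≠ 0, one has Q(y) ≤ −2(8π)²n²A/(1 + 4πA). -/
/-!
Put `z = y - 1/2`. By `4nπ`-periodicity `sin (4nπy) = sin (4nπz)`, and the quotient
`sin (4nπz) / (z + (A/n) sin (4nπz))` is even in `z`, so we may take `0 < z ≤ 1/(8n)`, where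
`0 < 4nπz ≤ π/2`. There Jordan's inequality `sin (4nπz) ≥ 8nz` bounds the numerator from below,
and `sin t ≤ t` bounds the denominator by `(1 + 4πA) z`, so the quotient is at least
`8n / (1 + 4πA)`; multiplying by `-16π²nA < 0` gives the claim.
-/

open Real

lemma sin_div_add_mul_sin_abs (ω c z : ℝ) :
    sin (ω * |z|) / (|z| + c * sin (ω * |z|)) = sin (ω * z) / (z + c * sin (ω * z)) := by
  rcases abs_choice z with h | h <;> rw [h]
  rw [mul_neg, sin_neg, mul_neg, ← neg_add, neg_div_neg_eq]

lemma div_le_sin_div_add_mul_sin {ω c z : ℝ} (hω : 0 < ω) (hc : 0 ≤ c) (hz : 0 < z)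
    (hωz : ω * z ≤ π / 2) :
    2 * ω / π / (1 + c * ω) ≤ sin (ω * z) / (z + c * sin (ω * z)) := by
  have hωz₀ : 0 ≤ ω * z := by positivity
  have hsin_ge : 2 / π * (ω * z) ≤ sin (ω * z) := mul_le_sin hωz₀ hωz
  have hsin_le : sin (ω * z) ≤ ω * z := sin_le hωz₀
  have hsin_pos : 0 < sin (ω * z) := lt_of_lt_of_le (by positivity) hsin_ge
  have hden_le : z + c * sin (ω * z) ≤ z * (1 + c * ω) := by
    nlinarith [mul_le_mul_of_nonneg_left hsin_le hc]
  calc 2 * ω / π / (1 + c * ω) = 2 / π * (ω * z) / (z * (1 + c * ω)) := by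
        field_simp
    _ ≤ sin (ω * z) / (z * (1 + c * ω)) := by gcongr
    _ ≤ sin (ω * z) / (z + c * sin (ω * z)) := by gcongr

theorem oscillatory_shear_potential_bound_general
    (n : ℕ) (hn : 1 ≤ n) (A : ℝ) (hA1 : 1 / (8 * π) < A)
    (y : ℝ) (hy1 : |y - 1/2| ≤ 1 / (8 * n)) (hy2 : y ≠ 1/2) :
    (-16 * π ^ 2 * n * A * Real.sin (4 * n * π * y)) /
      (y - 1/2 + (A / n) * Real.sin (4 * n * π * y))
      ≤ -2 * (8 * π) ^ 2 * n ^ 2 * A / (1 + 4 * π * A) := by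
  have hn₀ : (0 : ℝ) < n := by exact_mod_cast hn
  have hA : 0 < A := lt_trans (by positivity) hA1
  have hz : 0 < |y - 1/2| := abs_pos.mpr (sub_ne_zero.mpr hy2)
  have hωz : 4 * n * π * |y - 1/2| ≤ π / 2 := by
    calc 4 * n * π * |y - 1/2| ≤ 4 * n * π * (1 / (8 * n)) := by gcongr
      _ = π / 2 := by field_simp; ring
  have hperiodic : sin (4 * n * π * y) = sin (4 * n * π * (y - 1/2)) := by
    rw [← sin_add_nat_mul_two_pi (4 * n * π * (y - 1/2)) n]; congr 1; ring
  have hquot := div_le_sin_div_add_mul_sin (c := A / n) (by positivity) (by positivity) hz hωz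
  rw [sin_div_add_mul_sin_abs, ← hperiodic] at hquot
  have hconst : -2 * (8 * π) ^ 2 * n ^ 2 * A / (1 + 4 * π * A)
      = -16 * π ^ 2 * n * A * (2 * (4 * n * π) / π / (1 + A / n * (4 * n * π))) := by
    field_simp; ring
  have hfactor : -16 * π ^ 2 * n * A ≤ 0 := by
    have : 0 < π ^ 2 * n * A := by positivity
    linarith
  rw [hconst, mul_div_assoc]
  exact mul_le_mul_of_nonpos_left hquot hfactor

theorem oscillatory_shear_potential_bound
    (n : ℕ) (hn : 1 ≤ n) (A : ℝ) (hA1 : 1 / (8 * π) < A) (hA2 : A < 1 / (4 * π))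
    (y : ℝ) (hy1 : |y - 1/2| ≤ 1 / (8 * n)) (hy2 : y ≠ 1/2) :
    (-16 * π ^ 2 * n * A * Real.sin (4 * n * π * y)) /
      (y - 1/2 + (A / n) * Real.sin (4 * n * π * y))
      ≤ -2 * (8 * π) ^ 2 * n ^ 2 * A / (1 + 4 * π * A) :=
  oscillatory_shear_potential_bound_general n hn A hA1 y hy1 hy2
end

section
/- For η ∈ [0, 1/(8n)], one has the cancellation inequality Q̃(1/(4n) − η)·φ(1/(4n) − η)² + Q̃(1/(4n) + η)·φ(1/(4n) + η)² ≤ 0, where Q̃(y') = Q(y' + 1/2). Consequently ∫_{1/(8n)}^{3/(8n)} Q̃ φ² dy' ≤ 0. -/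
open Real Set intervalIntegral

/-- The piecewise-linear test function in the shifted variable `y' = y - 1/2`. -/
noncomputable def testFunShift (n : ℕ) (y' : ℝ) : ℝ :=
  if |y'| ≤ 1 / (8 * n) then 1 / (4 * n)
  else if |y'| ≤ 3 / (8 * n) then 3 / (8 * n) - |y'|
  else 0

/-- The shifted Rayleigh potential `Q̃(y') = Q(y' + 1/2)` of the oscillatory shear. -/
noncomputable def oscQshift (n : ℕ) (A : ℝ) (y' : ℝ) : ℝ :=
  (-16 * π ^ 2 * n * A * Real.sin (4 * n * π * (y' + 1/2))) /
    ((y' + 1/2) + (A / n) * Real.sin (4 * n * π * (y' + 1/2)) - 1/2)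

open MeasureTheory

/-!
Write `a = 1/(8n)`, `s = sin(4nπη) ≥ 0` and `t = (A/n) s`, so `0 ≤ t ≤ 4πAη ≤ η` by `sin x ≤ x`.
At the mirror points `1/(4n) ∓ η` the sine in `Q̃` takes the opposite values `±s`, the test
function is `a ± η`, and `U_n - 1/2` is `2a - η + t` resp. `2a + η - t`. The negative term thus
carries the larger weight `(a + η)²` over the smaller positive denominator, so the pair sums to
`≤ 0`. Folding `[1/(8n), 3/(8n)]` about its midpoint `1/(4n)` turns this into the integral bound.
-/

theorem intervalIntegral_nonpos_of_reflect_add_nonpos {f : ℝ → ℝ} {m a : ℝ} (ha : 0 ≤ a)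
    (hf : ∀ η ∈ Icc 0 a, f (m - η) + f (m + η) ≤ 0) :
    ∫ x in (m - a)..(m + a), f x ≤ 0 := by
  -- a non-integrable `f` has integral `0` by convention
  by_cases hint : IntervalIntegrable f volume (m - a) (m + a)
  · have hint' : IntervalIntegrable (fun x ↦ f (2 * m - x)) volume (m - a) (m + a) := by
      convert (hint.comp_sub_left (2 * m)).symm using 1 <;> ring
    have hreflect : ∫ x in (m - a)..(m + a), f (2 * m - x) = ∫ x in (m - a)..(m + a), f x := by
      rw [integral_comp_sub_left]; ring_nf
    have hsum : ∫ x in (m - a)..(m + a), (f x + f (2 * m - x)) ≤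
        ∫ _ in (m - a)..(m + a), (0 : ℝ) := by
      refine integral_mono_on (by linarith) (hint.add hint') intervalIntegrable_const ?_
      rintro x ⟨hx₁, hx₂⟩
      rcases le_total x m with hxm | hmx
      · have := hf (m - x) ⟨by linarith, by linarith⟩
        rwa [sub_sub_cancel, show m + (m - x) = 2 * m - x by ring] at this
      · have := hf (x - m) ⟨by linarith, by linarith⟩
        rw [add_sub_cancel, show m - (x - m) = 2 * m - x by ring] at this
        linarith
    rw [integral_add hint hint', hreflect, intervalIntegral.integral_zero] at hsum
    linarith
  · rw [integral_undef hint]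

lemma testFunShift_eq_of_mem_Icc {n : ℕ} (hn : 0 < n) {y : ℝ}
    (hy : y ∈ Icc (1 / (8 * (n : ℝ))) (3 / (8 * n))) : testFunShift n y = 3 / (8 * n) - y := by
  have hy0 : 0 ≤ y := le_trans (by positivity) hy.1
  rw [testFunShift, abs_of_nonneg hy0, if_pos hy.2]
  split_ifs with h
  · rw [le_antisymm h hy.1]
    field_simp
    norm_num
  · rfl

lemma sin_quarter_sub (n : ℕ) (hn : n ≠ 0) (η : ℝ) :
    sin (4 * n * π * ((1 / (4 * n) - η) + 1 / 2)) = sin (4 * n * π * η) := by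
  have hangle : 4 * n * π * ((1 / (4 * n) - η) + 1 / 2) = (π - 4 * n * π * η) + n * (2 * π) := by
    field_simp; ring
  rw [hangle, sin_add_nat_mul_two_pi, sin_pi_sub]

lemma sin_quarter_add (n : ℕ) (hn : n ≠ 0) (η : ℝ) :
    sin (4 * n * π * ((1 / (4 * n) + η) + 1 / 2)) = -sin (4 * n * π * η) := by
  have hangle : 4 * n * π * ((1 / (4 * n) + η) + 1 / 2) = (4 * n * π * η + π) + n * (2 * π) := by
    field_simp; ring
  rw [hangle, sin_add_nat_mul_two_pi, sin_add_pi]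

lemma oscQshift_quarter_sub (n : ℕ) (hn : n ≠ 0) (A η : ℝ) :
    oscQshift n A (1 / (4 * n) - η) =
      -(16 * π ^ 2 * n * A * sin (4 * n * π * η)) /
        (1 / (4 * n) - η + A / n * sin (4 * n * π * η)) := by
  rw [oscQshift, sin_quarter_sub n hn]
  ring_nf

lemma oscQshift_quarter_add (n : ℕ) (hn : n ≠ 0) (A η : ℝ) :
    oscQshift n A (1 / (4 * n) + η) =
      16 * π ^ 2 * n * A * sin (4 * n * π * η) /
        (1 / (4 * n) + η - A / n * sin (4 * n * π * η)) := by
  rw [oscQshift, sin_quarter_add n hn]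
  ring_nf

lemma div_mul_sin_le {n : ℕ} (hn : n ≠ 0) {A η : ℝ} (hA : 0 ≤ A) (hA' : 4 * π * A ≤ 1)
    (hη : 0 ≤ η) : A / n * sin (4 * n * π * η) ≤ η :=
  calc A / n * sin (4 * n * π * η) ≤ A / n * (4 * n * π * η) := by
        gcongr; exact sin_le (by positivity)
    _ = 4 * π * A * η := by field_simp
    _ ≤ η := mul_le_of_le_one_left hη hA'

theorem oscQshift_mul_testFunShift_sq_quarter_sub_add_nonpos {n : ℕ} (hn : 0 < n) {A : ℝ}
    (hA : 0 ≤ A) (hA' : 4 * π * A ≤ 1) {η : ℝ} (hη : η ∈ Icc (0 : ℝ) (1 / (8 * n))) :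
    oscQshift n A (1 / (4 * n) - η) * testFunShift n (1 / (4 * n) - η) ^ 2 +
      oscQshift n A (1 / (4 * n) + η) * testFunShift n (1 / (4 * n) + η) ^ 2 ≤ 0 := by
  obtain ⟨hη₀, hη₁⟩ := hη
  set a : ℝ := 1 / (8 * n) with ha_def
  have ha : 0 < a := by positivity
  have hquarter : 1 / (4 * (n : ℝ)) = 2 * a := by rw [ha_def]; field_simp; norm_num
  have hthree : 3 / (8 * (n : ℝ)) = 3 * a := by rw [ha_def]; ring
  rw [oscQshift_quarter_sub n hn.ne', oscQshift_quarter_add n hn.ne',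
    testFunShift_eq_of_mem_Icc hn ⟨by linarith, by linarith⟩,
    testFunShift_eq_of_mem_Icc hn ⟨by linarith, by linarith⟩, hthree, hquarter]
  set s := sin (4 * n * π * η)
  have hs : 0 ≤ s := by
    refine sin_nonneg_of_nonneg_of_le_pi (by positivity) ?_
    calc 4 * n * π * η ≤ 4 * n * π * a := by gcongr
      _ = π / 2 := by rw [ha_def]; field_simp; norm_num
      _ ≤ π := by linarith [pi_pos]
  have ht : A / n * s ≤ η := div_mul_sin_le hn.ne' hA hA' hη₀
  have ht₀ : 0 ≤ A / n * s := by positivity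
  set k := 16 * π ^ 2 * n * A * s
  have key : k / (2 * a + η - A / n * s) * (a - η) ^ 2 ≤
      k / (2 * a - η + A / n * s) * (a + η) ^ 2 := by
    have hD : 0 < 2 * a - η + A / n * s := by linarith
    gcongr k / ?_ * ?_
    · linarith
    · exact sq_le_sq' (by linarith) (by linarith)
  linear_combination key

theorem cancellation_inequality
    (n : ℕ) (hn : 1 ≤ n) (A : ℝ) (hA1 : 1 / (8 * π) < A) (hA2 : A < 1 / (4 * π)) :
    (∀ η ∈ Set.Icc (0:ℝ) (1 / (8 * n)),
      oscQshift n A (1 / (4 * n) - η) * (testFunShift n (1 / (4 * n) - η)) ^ 2 +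
        oscQshift n A (1 / (4 * n) + η) * (testFunShift n (1 / (4 * n) + η)) ^ 2 ≤ 0) ∧
    (∫ y' in (1 / (8 * (n:ℝ)))..(3 / (8 * (n:ℝ))),
        oscQshift n A y' * (testFunShift n y') ^ 2) ≤ 0 := by
  have hA : 0 ≤ A := le_trans (by positivity) hA1.le
  have hA' : 4 * π * A ≤ 1 := by
    have := (lt_div_iff₀' (by positivity)).mp hA2
    linarith
  have hpair : ∀ η ∈ Icc (0 : ℝ) (1 / (8 * n)), _ := fun η hη ↦
    oscQshift_mul_testFunShift_sq_quarter_sub_add_nonpos hn hA hA' hη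
  refine ⟨hpair, ?_⟩
  have hlower : 1 / (4 * (n : ℝ)) - 1 / (8 * n) = 1 / (8 * n) := by ring
  have hupper : 1 / (4 * (n : ℝ)) + 1 / (8 * n) = 3 / (8 * n) := by ring
  rw [← hlower, ← hupper]
  exact intervalIntegral_nonpos_of_reflect_add_nonpos
    (f := fun y ↦ oscQshift n A y * testFunShift n y ^ 2) (by positivity) hpair
end

section
/- Let Ω = (0,L) × (0,1) and let ψ ∈ C³(Ω̄) satisfy −Δψ = g(ψ) in Ω for some g ∈ C¹(ℝ), be L-periodic in x, and have ψ_x = 0 on {y=0} and {y=1}. If ‖g'∘ψ‖_{L^∞(Ω)} < π², then ψ_x ≡ 0 in Ω, i.e., ψ is a shear flow. -/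
/-!
Differentiating the equation in `x` shows that `u = ψ_x` solves `-Δu = g'(ψ) u` on the strip,
is `L`-periodic in `x` and vanishes on `y = 0` and `y = 1`. In place of the Poincaré inequality
we use a maximum principle with a weight: pick `β` with `sup g'(ψ) < β² < π²`, so that
`φ(y) = cos (β (y - 1/2))` is positive on `[0, 1]` and `-φ'' = β² φ`. By periodicity `u / φ`
attains its maximum `m` on the strip; if `m > 0`, then `m φ` touches `u` from above at an interior
point, where `β² u ≤ -Δu = g'(ψ) u < β² u`. Hence `u ≤ 0`, and likewise `-u ≤ 0`.
-/

open Real Set Filter Topology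

theorem IsLocalMax.deriv_deriv_nonpos {f : ℝ → ℝ} {a : ℝ} (h : IsLocalMax f a)
    (hc : ContinuousAt f a) : deriv (deriv f) a ≤ 0 := by
  by_contra! hpos
  have hmin : IsLocalMin f a := isLocalMin_of_deriv_deriv_pos hpos h.deriv_eq_zero hc
  have hconst : f =ᶠ[𝓝 a] fun _ => f a := by
    filter_upwards [h, hmin] with x hx hx' using le_antisymm hx hx'
  have hderiv : deriv f =ᶠ[𝓝 a] fun _ => 0 := by
    filter_upwards [hconst.eventuallyEq_nhds] with x hx using hx.deriv_eq.trans (deriv_const x _)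
  exact hpos.ne' (hderiv.deriv_eq.trans (deriv_const a _))

theorem deriv_deriv_sub {f g : ℝ → ℝ} (hf : ContDiff ℝ 2 f) (hg : ContDiff ℝ 2 g) (x : ℝ) :
    deriv (deriv fun y => f y - g y) x = deriv (deriv f) x - deriv (deriv g) x := by
  have := iteratedDeriv_sub hf.contDiffAt hg.contDiffAt (n := 2) (x := x)
  simp only [iteratedDeriv_succ, iteratedDeriv_zero] at this
  exact this

/-- The Laplacian in the form used by the statement: second derivatives along coordinate lines. -/
noncomputable def sliceLaplacian (f : ℝ × ℝ → ℝ) (p : ℝ × ℝ) : ℝ :=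
  deriv (deriv fun x => f (x, p.2)) p.1 + deriv (deriv fun y => f (p.1, y)) p.2

theorem sliceLaplacian_neg (f : ℝ × ℝ → ℝ) (p : ℝ × ℝ) :
    sliceLaplacian (-f) p = -sliceLaplacian f p := by
  simp only [sliceLaplacian, Pi.neg_apply, deriv.fun_neg', neg_add]

theorem sliceLaplacian_sub {f g : ℝ × ℝ → ℝ} (hf : ContDiff ℝ 2 f) (hg : ContDiff ℝ 2 g)
    (p : ℝ × ℝ) : sliceLaplacian (f - g) p = sliceLaplacian f p - sliceLaplacian g p := by
  have hfst {h : ℝ × ℝ → ℝ} (hh : ContDiff ℝ 2 h) : ContDiff ℝ 2 fun x => h (x, p.2) :=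
    hh.comp (contDiff_id.prodMk contDiff_const)
  have hsnd {h : ℝ × ℝ → ℝ} (hh : ContDiff ℝ 2 h) : ContDiff ℝ 2 fun y => h (p.1, y) :=
    hh.comp (contDiff_const.prodMk contDiff_id)
  have h1 := deriv_deriv_sub (hfst hf) (hfst hg) p.1
  have h2 := deriv_deriv_sub (hsnd hf) (hsnd hg) p.2
  simp only [sliceLaplacian, Pi.sub_apply]
  rw [h1, h2]
  ring

theorem IsLocalMax.sliceLaplacian_nonpos {f : ℝ × ℝ → ℝ} {q : ℝ × ℝ} (h : IsLocalMax f q)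
    (hf : Continuous f) : sliceLaplacian f q ≤ 0 := by
  have hx : IsLocalMax (fun x => f (x, q.2)) q.1 :=
    h.comp_continuous (g := fun x => (x, q.2)) (by fun_prop)
  have hy : IsLocalMax (fun y => f (q.1, y)) q.2 :=
    h.comp_continuous (g := fun y => (q.1, y)) (by fun_prop)
  exact add_nonpos (hx.deriv_deriv_nonpos (by fun_prop)) (hy.deriv_deriv_nonpos (by fun_prop))

theorem sliceLaplacian_le_of_isLocalMax_sub {u w : ℝ × ℝ → ℝ} {q : ℝ × ℝ}
    (hu : ContDiff ℝ 2 u) (hw : ContDiff ℝ 2 w) (h : IsLocalMax (u - w) q) :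
    sliceLaplacian u q ≤ sliceLaplacian w q := by
  have := h.sliceLaplacian_nonpos (hu.continuous.sub hw.continuous)
  rw [sliceLaplacian_sub hu hw] at this
  linarith

section PartialDeriv

variable {E F : Type*} [NormedAddCommGroup E] [NormedSpace ℝ E]
  [NormedAddCommGroup F] [NormedSpace ℝ F]

noncomputable def partialDeriv (v : E) (f : E → F) (p : E) : F := fderiv ℝ f p v

theorem ContDiff.partialDeriv {n : WithTop ℕ∞} {f : E → F} (hf : ContDiff ℝ (n + 1) f)
    (v : E) : ContDiff ℝ n (partialDeriv v f) :=
  (hf.fderiv_right le_rfl).clm_apply contDiff_const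

theorem partialDeriv_comm {f : E → F} (hf : ContDiff ℝ 2 f) (v w : E) :
    partialDeriv v (partialDeriv w f) = partialDeriv w (partialDeriv v f) := by
  have hd : Differentiable ℝ (fderiv ℝ f) := (hf.fderiv_right le_rfl).differentiable one_ne_zero
  have happly (v w : E) (p : E) :
      partialDeriv v (partialDeriv w f) p = fderiv ℝ (fderiv ℝ f) p v w := by
    change fderiv ℝ (fun q => fderiv ℝ f q w) p v = _
    rw [fderiv_clm_apply (hd p) (differentiableAt_const w)]
    simp
  ext p
  rw [happly, happly, (hf.contDiffAt.isSymmSndFDerivAt (by simp)).eq]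

end PartialDeriv

local notation "∂₁" => partialDeriv ((1, 0) : ℝ × ℝ)
local notation "∂₂" => partialDeriv ((0, 1) : ℝ × ℝ)

section Slices

variable {F : Type*} [NormedAddCommGroup F] [NormedSpace ℝ F]

theorem DifferentiableAt.hasDerivAt_slice_fst {f : ℝ × ℝ → F} {x y : ℝ}
    (hf : DifferentiableAt ℝ f (x, y)) : HasDerivAt (fun t => f (t, y)) (∂₁ f (x, y)) x :=
  hf.hasFDerivAt.comp_hasDerivAt x ((hasDerivAt_id x).prodMk (hasDerivAt_const x y))

theorem DifferentiableAt.hasDerivAt_slice_snd {f : ℝ × ℝ → F} {x y : ℝ}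
    (hf : DifferentiableAt ℝ f (x, y)) : HasDerivAt (fun t => f (x, t)) (∂₂ f (x, y)) y :=
  hf.hasFDerivAt.comp_hasDerivAt y ((hasDerivAt_const y x).prodMk (hasDerivAt_id y))

end Slices

theorem sliceLaplacian_eq_partialDeriv {f : ℝ × ℝ → ℝ} (hf : ContDiff ℝ 2 f) (p : ℝ × ℝ) :
    sliceLaplacian f p = ∂₁ (∂₁ f) p + ∂₂ (∂₂ f) p := by
  have hd : Differentiable ℝ f := hf.differentiable two_ne_zero
  have hd₁ : Differentiable ℝ (∂₁ f) := (hf.partialDeriv (n := 1) _).differentiable one_ne_zero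
  have hd₂ : Differentiable ℝ (∂₂ f) := (hf.partialDeriv (n := 1) _).differentiable one_ne_zero
  have e₁ : deriv (fun x => f (x, p.2)) = fun x => ∂₁ f (x, p.2) :=
    funext fun x => (hd _).hasDerivAt_slice_fst.deriv
  have e₂ : deriv (fun y => f (p.1, y)) = fun y => ∂₂ f (p.1, y) :=
    funext fun y => (hd _).hasDerivAt_slice_snd.deriv
  rw [sliceLaplacian, e₁, e₂, (hd₁ p).hasDerivAt_slice_fst.deriv, (hd₂ p).hasDerivAt_slice_snd.deriv]

theorem sliceLaplacian_partialDeriv_fst {f : ℝ × ℝ → ℝ} (hf : ContDiff ℝ 3 f) (x y : ℝ) :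
    sliceLaplacian (∂₁ f) (x, y) = deriv (fun t => sliceLaplacian f (t, y)) x := by
  have hf₂ : ContDiff ℝ 2 f := hf.of_le (by norm_num)
  have h₁₁ : ContDiff ℝ 1 (∂₁ (∂₁ f)) := (hf.partialDeriv (n := 2) _).partialDeriv _
  have h₂₂ : ContDiff ℝ 1 (∂₂ (∂₂ f)) := (hf.partialDeriv (n := 2) _).partialDeriv _
  have hcomm : ∂₂ (∂₂ (∂₁ f)) = ∂₁ (∂₂ (∂₂ f)) := by
    rw [partialDeriv_comm hf₂, partialDeriv_comm (hf.partialDeriv (n := 2) _)]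
  have e : (fun t => sliceLaplacian f (t, y)) = fun t => ∂₁ (∂₁ f) (t, y) + ∂₂ (∂₂ f) (t, y) :=
    funext fun t => sliceLaplacian_eq_partialDeriv hf₂ _
  rw [sliceLaplacian_eq_partialDeriv (hf.partialDeriv (n := 2) _), hcomm, e]
  exact (((h₁₁.differentiable one_ne_zero) _).hasDerivAt_slice_fst.fun_add
      ((h₂₂.differentiable one_ne_zero) _).hasDerivAt_slice_fst).deriv.symm

theorem cos_pos_of_abs_lt_pi {β y : ℝ} (hβ : |β| < π) (hy : y ∈ Icc (0 : ℝ) 1) :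
    0 < cos (β * (y - 1 / 2)) := by
  have hy' : |y - 1 / 2| ≤ 1 / 2 := abs_le.mpr ⟨by linarith [hy.1], by linarith [hy.2]⟩
  have : |β * (y - 1 / 2)| < π / 2 := by
    rw [abs_mul]
    nlinarith [abs_nonneg β, abs_nonneg (y - 1 / 2)]
  exact cos_pos_of_mem_Ioo (abs_lt.mp this)

theorem sliceLaplacian_mul_cos (m β : ℝ) (p : ℝ × ℝ) :
    sliceLaplacian (fun q => m * cos (β * (q.2 - 1 / 2))) p =
      -β ^ 2 * (m * cos (β * (p.2 - 1 / 2))) := by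
  have hlin (y : ℝ) : HasDerivAt (fun y => β * (y - 1 / 2)) β y :=
    (((hasDerivAt_id y).sub_const (1 / 2)).const_mul β).congr_deriv (mul_one β)
  have hd : deriv (fun y => m * cos (β * (y - 1 / 2))) =
      fun y => -(m * β) * sin (β * (y - 1 / 2)) := by
    ext y
    exact (((hasDerivAt_cos _).comp y (hlin y)).const_mul m).deriv.trans (by ring)
  have hdd : deriv (fun y => -(m * β) * sin (β * (y - 1 / 2))) p.2 =
      -β ^ 2 * (m * cos (β * (p.2 - 1 / 2))) :=
    (((hasDerivAt_sin _).comp p.2 (hlin p.2)).const_mul _).deriv.trans (by ring)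
  simp only [sliceLaplacian, deriv_const', deriv_const, hd, hdd, zero_add]

theorem sq_mul_le_neg_sliceLaplacian_of_le_mul_cos {u : ℝ × ℝ → ℝ} {β m : ℝ} {q : ℝ × ℝ}
    (hu : ContDiff ℝ 2 u) (hq : q.2 ∈ Ioo (0 : ℝ) 1)
    (hle : ∀ p : ℝ × ℝ, p.2 ∈ Icc (0 : ℝ) 1 → u p ≤ m * cos (β * (p.2 - 1 / 2)))
    (hq_eq : u q = m * cos (β * (q.2 - 1 / 2))) :
    β ^ 2 * u q ≤ -sliceLaplacian u q := by
  set w : ℝ × ℝ → ℝ := fun p => m * cos (β * (p.2 - 1 / 2))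
  have hw : ContDiff ℝ 2 w := by fun_prop
  have hmax : IsLocalMax (u - w) q := by
    have hnhds : {p : ℝ × ℝ | p.2 ∈ Ioo (0 : ℝ) 1} ∈ 𝓝 q :=
      (isOpen_Ioo.preimage continuous_snd).mem_nhds hq
    filter_upwards [hnhds] with p hp
    simpa [w, hq_eq] using hle p (Ioo_subset_Icc_self hp)
  have := sliceLaplacian_le_of_isLocalMax_sub hu hw hmax
  rw [sliceLaplacian_mul_cos, ← hq_eq] at this
  linarith

theorem exists_isMaxOn_of_periodic {Y : Type*} [TopologicalSpace Y] {K : Set Y}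
    (hK : IsCompact K) (hne : K.Nonempty) {L : ℝ} (hL : 0 < L) {h : ℝ × Y → ℝ}
    (hh : ContinuousOn h (Prod.snd ⁻¹' K)) (hper : ∀ x y, h (x + L, y) = h (x, y)) :
    ∃ q ∈ Prod.snd ⁻¹' K, IsMaxOn h (Prod.snd ⁻¹' K) q := by
  have hsub : Icc 0 L ×ˢ K ⊆ Prod.snd ⁻¹' K := fun p hp => hp.2
  obtain ⟨q, hq, hmax⟩ := (isCompact_Icc.prod hK).exists_isMaxOn
    ((nonempty_Icc.mpr hL.le).prod hne) (hh.mono hsub)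
  refine ⟨q, hsub hq, fun ⟨x, y⟩ hy => ?_⟩
  obtain ⟨x', hx', hx'_eq⟩ := Function.Periodic.exists_mem_Ico₀ (f := fun x => h (x, y))
    (fun x => hper x y) hL x
  simpa [hx'_eq] using isMaxOn_iff.mp hmax (x', y) ⟨Ico_subset_Icc_self hx', hy⟩

theorem nonpos_of_neg_sliceLaplacian_eq_mul {L β : ℝ} {u c : ℝ × ℝ → ℝ} (hL : 0 < L)
    (hβ : |β| < π) (hu : ContDiff ℝ 2 u) (hper : ∀ x y : ℝ, u (x + L, y) = u (x, y))
    (h₀ : ∀ x : ℝ, u (x, 0) = 0) (h₁ : ∀ x : ℝ, u (x, 1) = 0)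
    (hc : ∀ p : ℝ × ℝ, p.2 ∈ Icc (0 : ℝ) 1 → c p < β ^ 2)
    (hpde : ∀ p : ℝ × ℝ, p.2 ∈ Icc (0 : ℝ) 1 → -sliceLaplacian u p = c p * u p) :
    ∀ p : ℝ × ℝ, p.2 ∈ Icc (0 : ℝ) 1 → u p ≤ 0 := by
  set φ : ℝ → ℝ := fun y => cos (β * (y - 1 / 2))
  have hφ (y : ℝ) (hy : y ∈ Icc (0 : ℝ) 1) : 0 < φ y := cos_pos_of_abs_lt_pi hβ hy
  obtain ⟨q, hq, hmax⟩ := exists_isMaxOn_of_periodic isCompact_Icc (nonempty_Icc.2 zero_le_one)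
    hL (h := fun p => u p / φ p.2)
    (hu.continuous.continuousOn.div (by fun_prop) fun p hp => (hφ p.2 hp).ne')
    (fun x y => by simp only [hper])
  set m := u q / φ q.2
  have hle (p : ℝ × ℝ) (hp : p.2 ∈ Icc (0 : ℝ) 1) : u p ≤ m * φ p.2 :=
    (div_le_iff₀ (hφ p.2 hp)).mp (isMaxOn_iff.mp hmax p hp)
  intro p hp
  by_contra! hup
  have hm : 0 < m := pos_of_mul_pos_left (hup.trans_le (hle p hp)) (hφ p.2 hp).le
  have huq : u q = m * φ q.2 := (div_mul_cancel₀ _ (hφ q.2 hq).ne').symm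
  have huq_pos : 0 < u q := huq ▸ mul_pos hm (hφ q.2 hq)
  have hq_ne {t : ℝ} (ht : u (q.1, t) = 0) : q.2 ≠ t := fun h => huq_pos.ne' (by rwa [← h] at ht)
  have hq_int : q.2 ∈ Ioo (0 : ℝ) 1 :=
    ⟨hq.1.lt_of_ne (hq_ne (h₀ q.1)).symm, hq.2.lt_of_ne (hq_ne (h₁ q.1))⟩
  have hcontact := sq_mul_le_neg_sliceLaplacian_of_le_mul_cos hu hq_int hle huq
  rw [hpde q hq] at hcontact
  linarith [mul_lt_mul_of_pos_right (hc q hq) huq_pos]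

theorem eq_zero_of_neg_sliceLaplacian_eq_mul {L β : ℝ} {u c : ℝ × ℝ → ℝ} (hL : 0 < L)
    (hβ : |β| < π) (hu : ContDiff ℝ 2 u) (hper : ∀ x y : ℝ, u (x + L, y) = u (x, y))
    (h₀ : ∀ x : ℝ, u (x, 0) = 0) (h₁ : ∀ x : ℝ, u (x, 1) = 0)
    (hc : ∀ p : ℝ × ℝ, p.2 ∈ Icc (0 : ℝ) 1 → c p < β ^ 2)
    (hpde : ∀ p : ℝ × ℝ, p.2 ∈ Icc (0 : ℝ) 1 → -sliceLaplacian u p = c p * u p) :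
    ∀ p : ℝ × ℝ, p.2 ∈ Icc (0 : ℝ) 1 → u p = 0 := by
  have hneg := nonpos_of_neg_sliceLaplacian_eq_mul (u := -u) hL hβ hu.neg
    (fun x y => by simp only [Pi.neg_apply, hper]) (fun x => by simp [h₀])
    (fun x => by simp [h₁]) hc
    (fun p hp => by rw [sliceLaplacian_neg, Pi.neg_apply, hpde p hp, mul_neg])
  intro p hp
  exact le_antisymm (nonpos_of_neg_sliceLaplacian_eq_mul hL hβ hu hper h₀ h₁ hc hpde p hp)
    (neg_nonpos.mp (hneg p hp))

theorem exists_abs_lt_pi_lt_sq {M : ℝ} (hM : M < π ^ 2) : ∃ β : ℝ, |β| < π ∧ M < β ^ 2 := by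
  obtain ⟨t, ht, htπ⟩ := exists_between (max_lt hM (by positivity) : max M 0 < π ^ 2)
  have ht₀ : 0 ≤ t := (le_max_right M 0).trans ht.le
  refine ⟨√t, ?_, ?_⟩
  · rw [abs_of_nonneg (sqrt_nonneg t)]
    exact (sqrt_lt' pi_pos).mpr htπ
  · rw [sq_sqrt ht₀]
    exact (le_max_left M 0).trans_lt ht

theorem travelling_wave_near_Couette_is_shear
    (L : ℝ) (hL : 0 < L) (ψ : ℝ × ℝ → ℝ) (hψ : ContDiff ℝ 3 ψ)
    (g : ℝ → ℝ) (hg : ContDiff ℝ 1 g)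
    (hper : ∀ x y : ℝ, ψ (x + L, y) = ψ (x, y))
    (heq : ∀ p : ℝ × ℝ, p.2 ∈ Set.Icc (0:ℝ) 1 →
      -(deriv (deriv (fun x => ψ (x, p.2))) p.1 +
        deriv (deriv (fun y => ψ (p.1, y))) p.2) = g (ψ p))
    (hbc0 : ∀ x : ℝ, deriv (fun t => ψ (t, 0)) x = 0)
    (hbc1 : ∀ x : ℝ, deriv (fun t => ψ (t, 1)) x = 0)
    (hbound : ∃ M : ℝ, M < π ^ 2 ∧
      ∀ p : ℝ × ℝ, p.2 ∈ Set.Icc (0:ℝ) 1 → |deriv g (ψ p)| ≤ M) :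
    ∀ p : ℝ × ℝ, p.2 ∈ Set.Icc (0:ℝ) 1 →
      deriv (fun x => ψ (x, p.2)) p.1 = 0 := by
  obtain ⟨M, hM, hgM⟩ := hbound
  obtain ⟨β, hβ, hMβ⟩ := exists_abs_lt_pi_lt_sq hM
  have hψd : Differentiable ℝ ψ := hψ.differentiable (by norm_num)
  have hslice (x y : ℝ) : deriv (fun t => ψ (t, y)) x = ∂₁ ψ (x, y) :=
    (hψd _).hasDerivAt_slice_fst.deriv
  have hper' (x y : ℝ) : ∂₁ ψ (x + L, y) = ∂₁ ψ (x, y) := by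
    rw [← hslice, ← hslice, ← deriv_comp_add_const]
    simp only [hper]
  have hpde (p : ℝ × ℝ) (hp : p.2 ∈ Icc (0 : ℝ) 1) :
      -sliceLaplacian (∂₁ ψ) p = deriv g (ψ p) * ∂₁ ψ p := by
    have e : (fun t => sliceLaplacian ψ (t, p.2)) = fun t => -g (ψ (t, p.2)) :=
      funext fun t => neg_eq_iff_eq_neg.mp (heq (t, p.2) hp)
    have hd : HasDerivAt (fun t => g (ψ (t, p.2))) (deriv g (ψ p) * ∂₁ ψ p) p.1 :=
      (hg.differentiable one_ne_zero _).hasDerivAt.comp p.1 (hψd _).hasDerivAt_slice_fst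
    rw [sliceLaplacian_partialDeriv_fst hψ, e, hd.fun_neg.deriv, neg_neg]
  intro p hp
  rw [hslice]
  exact eq_zero_of_neg_sliceLaplacian_eq_mul hL hβ (hψ.partialDeriv (n := 2) _) hper'
    (fun x => (hslice x 0).symm.trans (hbc0 x)) (fun x => (hslice x 1).symm.trans (hbc1 x))
    (fun p hp => (le_abs_self _).trans_lt ((hgM p hp).trans_lt hMβ)) hpde p hp
end

section
/- Let Ω₂ = {(y,z) : 0 < y < 1, z ∈ ℝ/(L_zℤ)}. For every vector field u = (v,w) ∈ H¹(Ω₂)² with v = 0 on {y=0} ∪ {y=1} and zero circulation ∮_{y=0} u·dl = ∮_{y=1} u·dl = 0, there exists a constant c₀ > 0 (independent of u) such that ‖u‖_{L²(Ω₂)} ≤ c₀(‖div u‖_{L²(Ω₂)} + ‖curl u‖_{L²(Ω₂)}), where div u = v_y + w_z and curl u = w_y − v_z. -/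
/-!
Expanding the squares, `‖div u‖² + ‖curl u‖²` is `‖∇u‖²` plus twice the integral of the Jacobian
`v_y w_z - v_z w_y`, and that integral vanishes because `v = 0` on the walls and everything is
periodic in `z`. So it suffices to bound `‖u‖` by `‖∇u‖`. For `v` this is the Poincaré inequality
in `y`. For `w`, Poincaré–Wirtinger on each circle `{y = c}` bounds `w` minus its circle average by
`w_z`; the circle average vanishes at `y = 0` by the circulation condition, so it is bounded by
`w_y`. The constant is `c₀ = √(1 + L_z²)`.
-/

open Real Set intervalIntegral

namespace intervalIntegral

variable {f f' : ℝ → ℝ} {a b : ℝ}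

theorem integral_sub_mean_sq (hf : Continuous f) :
    ∫ x in a..b, (f x - (∫ t in a..b, f t) / (b - a)) ^ 2
      = (∫ x in a..b, f x ^ 2) - (∫ x in a..b, f x) ^ 2 / (b - a) := by
  obtain rfl | hab := eq_or_ne a b
  · simp
  set c := (∫ t in a..b, f t) / (b - a) with hc
  have hexpand : ∀ x, (f x - c) ^ 2 = (f x ^ 2 - 2 * c * f x) + c ^ 2 := fun x => by ring
  simp_rw [hexpand]
  rw [integral_add ((by fun_prop : Continuous _).intervalIntegrable _ _) intervalIntegrable_const,
    integral_sub ((by fun_prop : Continuous _).intervalIntegrable _ _)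
      ((by fun_prop : Continuous _).intervalIntegrable _ _),
    integral_const_mul, integral_const, smul_eq_mul]
  rw [hc]
  field_simp [sub_ne_zero.2 hab.symm]
  ring

theorem sq_integral_le_mul_integral_sq (hf : Continuous f) (hab : a ≤ b) :
    (∫ x in a..b, f x) ^ 2 ≤ (b - a) * ∫ x in a..b, f x ^ 2 := by
  obtain rfl | hab := hab.eq_or_lt
  · simp
  have h := integral_nonneg (μ := MeasureTheory.volume) hab.le
    fun x _ => sq_nonneg (f x - (∫ t in a..b, f t) / (b - a))
  rw [integral_sub_mean_sq hf, sub_nonneg, div_le_iff₀ (sub_pos.2 hab)] at h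
  linarith

section Poincare

variable (hf : ∀ x, HasDerivAt f (f' x) x) (hf' : Continuous f')
include hf hf'

theorem sq_sub_le_mul_integral_deriv_sq {x c : ℝ} (hx : x ∈ Icc a b) (hc : c ∈ Icc a b) :
    (f x - f c) ^ 2 ≤ (b - a) * ∫ t in a..b, f' t ^ 2 := by
  wlog hcx : c ≤ x generalizing x c
  · rw [← neg_sub, neg_sq]
    exact this hc hx (le_of_not_ge hcx)
  calc (f x - f c) ^ 2 = (∫ t in c..x, f' t) ^ 2 := by
        rw [integral_eq_sub_of_hasDerivAt (fun t _ => hf t) (hf'.intervalIntegrable _ _)]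
    _ ≤ (x - c) * ∫ t in c..x, f' t ^ 2 := sq_integral_le_mul_integral_sq hf' hcx
    _ ≤ (b - a) * ∫ t in a..b, f' t ^ 2 := by
        refine mul_le_mul (by linarith [hx.2, hc.1])
          (integral_mono_interval hc.1 hcx hx.2 (MeasureTheory.ae_of_all _ fun t => sq_nonneg _)
            ((hf'.pow 2).intervalIntegrable _ _))
          (integral_nonneg hcx fun t _ => sq_nonneg _) (by linarith [hx.2, hc.1])

theorem integral_sq_le_of_eq_zero (hab : a ≤ b) {c : ℝ} (hc : c ∈ Icc a b) (hfc : f c = 0) :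
    ∫ x in a..b, f x ^ 2 ≤ (b - a) ^ 2 * ∫ x in a..b, f' x ^ 2 := by
  have hf_cont : Continuous f := continuous_iff_continuousAt.2 fun x => (hf x).continuousAt
  calc ∫ x in a..b, f x ^ 2 ≤ ∫ _ in a..b, (b - a) * ∫ t in a..b, f' t ^ 2 :=
        integral_mono_on hab ((hf_cont.pow 2).intervalIntegrable _ _) intervalIntegrable_const
          fun x hx => by simpa [hfc] using sq_sub_le_mul_integral_deriv_sq hf hf' hx hc
    _ = (b - a) ^ 2 * ∫ x in a..b, f' x ^ 2 := by rw [integral_const, smul_eq_mul]; ring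

theorem integral_sq_le_of_integral_eq_zero (hab : a < b) (hmean : ∫ x in a..b, f x = 0) :
    ∫ x in a..b, f x ^ 2 ≤ (b - a) ^ 2 * ∫ x in a..b, f' x ^ 2 := by
  have hf_cont : Continuous f := continuous_iff_continuousAt.2 fun x => (hf x).continuousAt
  obtain ⟨c, hc, hfc⟩ := exists_eq_interval_average hab.ne hf_cont.continuousOn
  rw [interval_average_eq_div, hmean, zero_div] at hfc
  rw [uIoo_of_le hab.le] at hc
  exact integral_sq_le_of_eq_zero hf hf' hab.le (Ioo_subset_Icc_self hc) hfc

theorem integral_sq_le_mul_integral_deriv_sq_add (hab : a < b) :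
    ∫ x in a..b, f x ^ 2
      ≤ (b - a) ^ 2 * (∫ x in a..b, f' x ^ 2) + (∫ x in a..b, f x) ^ 2 / (b - a) := by
  have hf_cont : Continuous f := continuous_iff_continuousAt.2 fun x => (hf x).continuousAt
  have hmean : ∫ x in a..b, (f x - (∫ t in a..b, f t) / (b - a)) = 0 := by
    rw [integral_sub (hf_cont.intervalIntegrable _ _) intervalIntegrable_const, integral_const,
      smul_eq_mul]
    field_simp [(sub_pos.2 hab).ne']
    ring
  have h := integral_sq_le_of_integral_eq_zero (fun x => (hf x).sub_const _) hf' hab hmean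
  rw [integral_sub_mean_sq hf_cont] at h
  linarith

end Poincare

theorem hasDerivAt_integral_of_continuous {F F' : ℝ → ℝ → ℝ}
    (hF : Continuous fun q : ℝ × ℝ => F q.1 q.2) (hF' : Continuous fun q : ℝ × ℝ => F' q.1 q.2)
    (hd : ∀ s t, HasDerivAt (F · t) (F' s t) s) (a b s₀ : ℝ) :
    HasDerivAt (fun s => ∫ t in a..b, F s t) (∫ t in a..b, F' s₀ t) s₀ := by
  obtain ⟨C, hC⟩ : ∃ C, ∀ q ∈ Icc (s₀ - 1) (s₀ + 1) ×ˢ uIcc a b, ‖F' q.1 q.2‖ ≤ C :=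
    (isCompact_Icc.prod isCompact_uIcc).exists_bound_of_continuousOn hF'.continuousOn
  refine (hasDerivAt_integral_of_dominated_loc_of_deriv_le (bound := fun _ => C)
    (Metric.ball_mem_nhds s₀ one_pos)
    (Filter.Eventually.of_forall fun s =>
      (hF.comp (Continuous.prodMk_right s)).aestronglyMeasurable)
    ((hF.comp (Continuous.prodMk_right s₀)).intervalIntegrable a b)
    (hF'.comp (Continuous.prodMk_right s₀)).aestronglyMeasurable
    (MeasureTheory.ae_of_all _ fun t ht s hs => hC (s, t) ⟨?_, uIoc_subset_uIcc ht⟩)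
    intervalIntegrable_const
    (MeasureTheory.ae_of_all _ fun t _ s _ => hd s t)).2
  rw [Metric.mem_ball, Real.dist_eq, abs_lt] at hs
  constructor <;> linarith [hs.1, hs.2]

end intervalIntegral

theorem Function.Periodic.intervalIntegral_mul_comp_add {F G : ℝ → ℝ} {T : ℝ}
    (hF : Function.Periodic F T) (hG : Function.Periodic G T) (s : ℝ) :
    ∫ z in (0:ℝ)..T, F z * G (z + s) = ∫ z in (0:ℝ)..T, F (z - s) * G z := by
  have hper : Function.Periodic (fun z => F (z - s) * G z) T := fun z => by
    simp only [add_sub_right_comm, hF (z - s), hG z]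
  calc ∫ z in (0:ℝ)..T, F z * G (z + s) = ∫ z in (0:ℝ)..T, F (z + s - s) * G (z + s) := by
        simp only [add_sub_cancel_right]
    _ = ∫ z in s..s + T, F (z - s) * G z := by
        rw [integral_comp_add_right (fun z => F (z - s) * G z), zero_add, add_comm T]
    _ = ∫ z in (0:ℝ)..T, F (z - s) * G z := by
        rw [hper.intervalIntegral_add_eq s 0, zero_add]

noncomputable def partialFst (f : ℝ × ℝ → ℝ) (p : ℝ × ℝ) : ℝ := deriv (fun t => f (t, p.2)) p.1

noncomputable def partialSnd (f : ℝ × ℝ → ℝ) (p : ℝ × ℝ) : ℝ := deriv (fun t => f (p.1, t)) p.2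

section PartialDerivatives

variable {f : ℝ × ℝ → ℝ}

theorem hasDerivAt_partialFst (hf : Differentiable ℝ f) (y z : ℝ) :
    HasDerivAt (fun t => f (t, z)) (partialFst f (y, z)) y :=
  ((hf.comp (by fun_prop : Differentiable ℝ fun t : ℝ => (t, z))) y).hasDerivAt

theorem hasDerivAt_partialSnd (hf : Differentiable ℝ f) (y z : ℝ) :
    HasDerivAt (fun t => f (y, t)) (partialSnd f (y, z)) z :=
  ((hf.comp (by fun_prop : Differentiable ℝ fun t : ℝ => (y, t))) z).hasDerivAt

theorem continuous_partialFst (hf : ContDiff ℝ 1 f) : Continuous (partialFst f) := by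
  have h : partialFst f = fun p => fderiv ℝ f p (1, 0) := funext fun p =>
    (((hf.differentiable one_ne_zero) p).hasFDerivAt.comp_hasDerivAt p.1
      ((hasDerivAt_id p.1).prodMk (hasDerivAt_const p.1 p.2))).deriv
  rw [h]
  exact (hf.continuous_fderiv one_ne_zero).clm_apply continuous_const

theorem continuous_partialSnd (hf : ContDiff ℝ 1 f) : Continuous (partialSnd f) := by
  have h : partialSnd f = fun p => fderiv ℝ f p (0, 1) := funext fun p =>
    (((hf.differentiable one_ne_zero) p).hasFDerivAt.comp_hasDerivAt p.2
      ((hasDerivAt_const p.2 p.1).prodMk (hasDerivAt_id p.2))).deriv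
  rw [h]
  exact (hf.continuous_fderiv one_ne_zero).clm_apply continuous_const

theorem periodic_partialFst {L : ℝ} (hf : ∀ y, Function.Periodic (fun z => f (y, z)) L)
    (y : ℝ) : Function.Periodic (fun z => partialFst f (y, z)) L := fun z => by
  simp only [partialFst, fun t => hf t z]

end PartialDerivatives

noncomputable def stripIntegral (L : ℝ) (f : ℝ × ℝ → ℝ) : ℝ :=
  ∫ y in (0:ℝ)..1, ∫ z in (0:ℝ)..L, f (y, z)

section StripIntegral

variable {L : ℝ} {f g : ℝ × ℝ → ℝ}

theorem stripIntegral_add (hf : Continuous f) (hg : Continuous g) :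
    stripIntegral L (fun p => f p + g p) = stripIntegral L f + stripIntegral L g := by
  rw [stripIntegral, stripIntegral, stripIntegral,
    ← integral_add ((by fun_prop : Continuous _).intervalIntegrable _ _)
      ((by fun_prop : Continuous _).intervalIntegrable _ _)]
  exact integral_congr fun y _ => integral_add ((by fun_prop : Continuous _).intervalIntegrable _ _)
    ((by fun_prop : Continuous _).intervalIntegrable _ _)

theorem stripIntegral_sub (hf : Continuous f) (hg : Continuous g) :
    stripIntegral L (fun p => f p - g p) = stripIntegral L f - stripIntegral L g := by
  rw [stripIntegral, stripIntegral, stripIntegral,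
    ← integral_sub ((by fun_prop : Continuous _).intervalIntegrable _ _)
      ((by fun_prop : Continuous _).intervalIntegrable _ _)]
  exact integral_congr fun y _ => integral_sub ((by fun_prop : Continuous _).intervalIntegrable _ _)
    ((by fun_prop : Continuous _).intervalIntegrable _ _)

theorem stripIntegral_const_mul (c : ℝ) (f : ℝ × ℝ → ℝ) :
    stripIntegral L (fun p => c * f p) = c * stripIntegral L f := by
  simp only [stripIntegral, intervalIntegral.integral_const_mul]

theorem stripIntegral_nonneg (hL : 0 ≤ L) (hf : ∀ p, 0 ≤ f p) : 0 ≤ stripIntegral L f :=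
  integral_nonneg zero_le_one fun _ _ => integral_nonneg hL fun _ _ => hf _

theorem stripIntegral_swap (hL : 0 ≤ L) (hf : Continuous f) :
    stripIntegral L f = ∫ z in (0:ℝ)..L, ∫ y in (0:ℝ)..1, f (y, z) := by
  simp only [stripIntegral, integral_of_le hL, integral_of_le zero_le_one]
  refine MeasureTheory.integral_integral_swap ?_
  rw [MeasureTheory.Measure.prod_restrict]
  exact (hf.continuousOn.integrableOn_compact (isCompact_Icc.prod isCompact_Icc)).mono_set
    (prod_mono Ioc_subset_Icc_self Ioc_subset_Icc_self)

theorem hasDerivAt_stripIntegral {F F' : ℝ → ℝ × ℝ → ℝ}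
    (hF : Continuous fun q : ℝ × (ℝ × ℝ) => F q.1 q.2)
    (hF' : Continuous fun q : ℝ × (ℝ × ℝ) => F' q.1 q.2)
    (hd : ∀ s p, HasDerivAt (F · p) (F' s p) s) (s₀ : ℝ) :
    HasDerivAt (fun s => stripIntegral L (F s)) (stripIntegral L (F' s₀)) s₀ :=
  hasDerivAt_integral_of_continuous (by fun_prop) (by fun_prop)
    (fun s y => hasDerivAt_integral_of_continuous (by fun_prop) (by fun_prop)
      (fun s z => hd s (y, z)) 0 L s) 0 1 s₀

end StripIntegral

section VectorField

variable {L : ℝ} {v w : ℝ × ℝ → ℝ}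

theorem stripIntegral_partialFst_mul {g : ℝ × ℝ → ℝ} (hL : 0 ≤ L) (hv : ContDiff ℝ 1 v)
    (hg : ContDiff ℝ 1 g) (hv0 : ∀ z, v (0, z) = 0) (hv1 : ∀ z, v (1, z) = 0) :
    stripIntegral L (fun p => partialFst v p * g p)
      = -stripIntegral L (fun p => v p * partialFst g p) := by
  have := continuous_partialFst hv
  have := continuous_partialFst hg
  have := hv.continuous
  have := hg.continuous
  rw [stripIntegral_swap hL (by fun_prop), stripIntegral_swap hL (by fun_prop), ← integral_neg]
  refine integral_congr fun z _ => ?_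
  have h := integral_mul_deriv_eq_deriv_mul
    (fun y _ => hasDerivAt_partialFst (hv.differentiable one_ne_zero) y z)
    (fun y _ => hasDerivAt_partialFst (hg.differentiable one_ne_zero) y z)
    ((by fun_prop : Continuous _).intervalIntegrable 0 1)
    ((by fun_prop : Continuous _).intervalIntegrable 0 1)
  rw [hv0, hv1, zero_mul, zero_mul, sub_zero, zero_sub] at h
  rw [h, neg_neg]

/-- For `C¹` fields one cannot integrate by parts twice; instead `s ↦ ∫∫ ∂_y v (y, z) w (y, z + s)`
is differentiated at `s = 0` both directly and after moving `∂_y` onto `w` and the shift onto `v`. -/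
theorem stripIntegral_partialFst_mul_partialSnd (hL : 0 ≤ L) (hv : ContDiff ℝ 1 v)
    (hw : ContDiff ℝ 1 w) (hpv : ∀ y, Function.Periodic (fun z => v (y, z)) L)
    (hpw : ∀ y, Function.Periodic (fun z => w (y, z)) L)
    (hv0 : ∀ z, v (0, z) = 0) (hv1 : ∀ z, v (1, z) = 0) :
    stripIntegral L (fun p => partialFst v p * partialSnd w p)
      = stripIntegral L (fun p => partialSnd v p * partialFst w p) := by
  have := hv.continuous
  have := hw.continuous
  have := continuous_partialFst hv
  have := continuous_partialSnd hv
  have := continuous_partialFst hw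
  have := continuous_partialSnd hw
  have hvd := hv.differentiable one_ne_zero
  have hwd := hw.differentiable one_ne_zero
  set N := fun s => stripIntegral L (fun p => partialFst v p * w (p.1, p.2 + s))
  have hN : N = fun s => -stripIntegral L (fun p => v (p.1, p.2 - s) * partialFst w p) := by
    funext s
    dsimp only [N]
    rw [stripIntegral_partialFst_mul (g := fun p => w (p.1, p.2 + s)) hL hv (by fun_prop) hv0 hv1]
    congr 1
    exact integral_congr fun y _ =>
      (hpv y).intervalIntegral_mul_comp_add (periodic_partialFst hpw y) s
  have hN_direct : HasDerivAt N (stripIntegral L fun p => partialFst v p * partialSnd w p) 0 := by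
    simpa using hasDerivAt_stripIntegral
      (F := fun s p => partialFst v p * w (p.1, p.2 + s))
      (F' := fun s p => partialFst v p * partialSnd w (p.1, p.2 + s)) (by fun_prop) (by fun_prop)
      (fun s p => ((hasDerivAt_partialSnd hwd p.1 (p.2 + s)).comp_const_add p.2 s).const_mul _) 0
  have hN_moved : HasDerivAt N (stripIntegral L fun p => partialSnd v p * partialFst w p) 0 := by
    rw [hN]
    simpa [stripIntegral, integral_neg] using (hasDerivAt_stripIntegral
      (F := fun s p => v (p.1, p.2 - s) * partialFst w p)
      (F' := fun s p => -partialSnd v (p.1, p.2 - s) * partialFst w p) (by fun_prop) (by fun_prop)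
      (fun s p => ((hasDerivAt_partialSnd hvd p.1 (p.2 - s)).comp_const_sub p.2 s).mul_const _)
      0).fun_neg
  exact hN_direct.unique hN_moved

theorem stripIntegral_div_sq_add_stripIntegral_curl_sq (hL : 0 ≤ L) (hv : ContDiff ℝ 1 v)
    (hw : ContDiff ℝ 1 w) (hpv : ∀ y, Function.Periodic (fun z => v (y, z)) L)
    (hpw : ∀ y, Function.Periodic (fun z => w (y, z)) L)
    (hv0 : ∀ z, v (0, z) = 0) (hv1 : ∀ z, v (1, z) = 0) :
    stripIntegral L (fun p => (partialFst v p + partialSnd w p) ^ 2)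
        + stripIntegral L (fun p => (partialFst w p - partialSnd v p) ^ 2)
      = stripIntegral L (fun p => partialFst v p ^ 2)
        + stripIntegral L (fun p => partialSnd v p ^ 2)
        + stripIntegral L (fun p => partialFst w p ^ 2)
        + stripIntegral L (fun p => partialSnd w p ^ 2) := by
  have := continuous_partialFst hv
  have := continuous_partialSnd hv
  have := continuous_partialFst hw
  have := continuous_partialSnd hw
  have hexpand : (fun p => (partialFst v p + partialSnd w p) ^ 2
        + (partialFst w p - partialSnd v p) ^ 2)
      = fun p => partialFst v p ^ 2 + partialSnd v p ^ 2 + partialFst w p ^ 2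
        + partialSnd w p ^ 2 + (2 * (partialFst v p * partialSnd w p)
          - 2 * (partialSnd v p * partialFst w p)) :=
    funext fun p => by ring
  rw [← stripIntegral_add (by fun_prop) (by fun_prop), hexpand,
    stripIntegral_add (by fun_prop) (by fun_prop), stripIntegral_sub (by fun_prop) (by fun_prop),
    stripIntegral_const_mul, stripIntegral_const_mul,
    stripIntegral_partialFst_mul_partialSnd hL hv hw hpv hpw hv0 hv1,
    stripIntegral_add (by fun_prop) (by fun_prop), stripIntegral_add (by fun_prop) (by fun_prop),
    stripIntegral_add (by fun_prop) (by fun_prop)]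
  ring

theorem stripIntegral_sq_le_stripIntegral_partialFst_sq (hL : 0 ≤ L) (hv : ContDiff ℝ 1 v)
    (hv0 : ∀ z, v (0, z) = 0) :
    stripIntegral L (fun p => v p ^ 2) ≤ stripIntegral L (fun p => partialFst v p ^ 2) := by
  have := hv.continuous
  have := continuous_partialFst hv
  rw [stripIntegral_swap hL (by fun_prop), stripIntegral_swap hL (by fun_prop)]
  refine integral_mono_on hL ((by fun_prop : Continuous _).intervalIntegrable _ _)
    ((by fun_prop : Continuous _).intervalIntegrable _ _) fun z _ => ?_
  simpa using integral_sq_le_of_eq_zero (f := fun y => v (y, z))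
    (fun y => hasDerivAt_partialFst (hv.differentiable one_ne_zero) y z) (by fun_prop)
    zero_le_one (left_mem_Icc.2 zero_le_one) (hv0 z)

theorem stripIntegral_sq_le_of_circulation_eq_zero (hL : 0 < L) (hw : ContDiff ℝ 1 w)
    (hw0 : ∫ z in (0:ℝ)..L, w (0, z) = 0) :
    stripIntegral L (fun p => w p ^ 2)
      ≤ L ^ 2 * stripIntegral L (fun p => partialSnd w p ^ 2)
        + stripIntegral L (fun p => partialFst w p ^ 2) := by
  have := hw.continuous
  have := continuous_partialFst hw
  have := continuous_partialSnd hw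
  have hwd := hw.differentiable one_ne_zero
  set m := fun y => ∫ z in (0:ℝ)..L, w (y, z)
  have hm : ∀ y, HasDerivAt m (∫ z in (0:ℝ)..L, partialFst w (y, z)) y := fun y =>
    hasDerivAt_integral_of_continuous (F := fun y z => w (y, z)) (by fun_prop)
      (by fun_prop) (fun y z => hasDerivAt_partialFst hwd y z) 0 L y
  have hm_sq : ∫ y in (0:ℝ)..1, m y ^ 2 ≤ L * stripIntegral L (fun p => partialFst w p ^ 2) :=
    calc ∫ y in (0:ℝ)..1, m y ^ 2
        ≤ ∫ y in (0:ℝ)..1, (∫ z in (0:ℝ)..L, partialFst w (y, z)) ^ 2 := by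
          simpa using integral_sq_le_of_eq_zero hm (by fun_prop) zero_le_one
            (left_mem_Icc.2 zero_le_one) hw0
      _ ≤ ∫ y in (0:ℝ)..1, L * ∫ z in (0:ℝ)..L, partialFst w (y, z) ^ 2 :=
          integral_mono_on zero_le_one ((by fun_prop : Continuous _).intervalIntegrable _ _)
            ((by fun_prop : Continuous _).intervalIntegrable _ _) fun y _ => by
              simpa using sq_integral_le_mul_integral_sq (by fun_prop) hL.le
      _ = L * stripIntegral L (fun p => partialFst w p ^ 2) := integral_const_mul _ _
  calc stripIntegral L (fun p => w p ^ 2)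
      ≤ ∫ y in (0:ℝ)..1, (L ^ 2 * (∫ z in (0:ℝ)..L, partialSnd w (y, z) ^ 2) + m y ^ 2 / L) :=
        integral_mono_on zero_le_one ((by fun_prop : Continuous _).intervalIntegrable _ _)
          ((by fun_prop : Continuous _).intervalIntegrable _ _) fun y _ => by
            simpa using integral_sq_le_mul_integral_deriv_sq_add (f := fun z => w (y, z))
              (fun z => hasDerivAt_partialSnd hwd y z) (by fun_prop) hL
    _ = L ^ 2 * stripIntegral L (fun p => partialSnd w p ^ 2) + (∫ y in (0:ℝ)..1, m y ^ 2) / L := by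
        rw [integral_add ((by fun_prop : Continuous _).intervalIntegrable _ _)
          ((by fun_prop : Continuous _).intervalIntegrable _ _), integral_const_mul, integral_div]
        rfl
    _ ≤ L ^ 2 * stripIntegral L (fun p => partialSnd w p ^ 2)
          + stripIntegral L (fun p => partialFst w p ^ 2) := by
        gcongr
        rw [div_le_iff₀ hL, mul_comm]
        exact hm_sq

theorem stripIntegral_sq_le_div_sq_add_curl_sq (hL : 0 < L) (hv : ContDiff ℝ 1 v)
    (hw : ContDiff ℝ 1 w) (hpv : ∀ y, Function.Periodic (fun z => v (y, z)) L)
    (hpw : ∀ y, Function.Periodic (fun z => w (y, z)) L)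
    (hv0 : ∀ z, v (0, z) = 0) (hv1 : ∀ z, v (1, z) = 0) (hw0 : ∫ z in (0:ℝ)..L, w (0, z) = 0) :
    stripIntegral L (fun p => v p ^ 2 + w p ^ 2)
      ≤ (1 + L ^ 2) * (stripIntegral L (fun p => (partialFst v p + partialSnd w p) ^ 2)
        + stripIntegral L (fun p => (partialFst w p - partialSnd v p) ^ 2)) := by
  have hv_bound := stripIntegral_sq_le_stripIntegral_partialFst_sq hL.le hv hv0
  have hw_bound := stripIntegral_sq_le_of_circulation_eq_zero hL hw hw0
  have h_nonneg : ∀ f : ℝ × ℝ → ℝ, 0 ≤ stripIntegral L (fun p => f p ^ 2) := fun f =>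
    stripIntegral_nonneg hL.le fun p => sq_nonneg (f p)
  have := hv.continuous
  have := hw.continuous
  rw [stripIntegral_add (by fun_prop) (by fun_prop),
    stripIntegral_div_sq_add_stripIntegral_curl_sq hL.le hv hw hpv hpw hv0 hv1]
  nlinarith [h_nonneg (partialFst v), h_nonneg (partialSnd v), h_nonneg (partialFst w),
    h_nonneg (partialSnd w), sq_nonneg L]

end VectorField

theorem Real.sqrt_add_le_add_sqrt {x y : ℝ} (hx : 0 ≤ x) (hy : 0 ≤ y) : √(x + y) ≤ √x + √y := by
  refine Real.sqrt_le_iff.2 ⟨by positivity, ?_⟩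
  nlinarith [Real.sq_sqrt hx, Real.sq_sqrt hy, Real.sqrt_nonneg x, Real.sqrt_nonneg y]

theorem div_curl_estimate_periodic_strip (Lz : ℝ) (hLz : 0 < Lz) :
    ∃ c₀ > 0, ∀ v w : ℝ × ℝ → ℝ,
      ContDiff ℝ 1 v → ContDiff ℝ 1 w →
      (∀ y z : ℝ, v (y, z + Lz) = v (y, z)) →
      (∀ y z : ℝ, w (y, z + Lz) = w (y, z)) →
      (∀ z : ℝ, v (0, z) = 0) → (∀ z : ℝ, v (1, z) = 0) →
      (∫ z in (0:ℝ)..Lz, w (0, z)) = 0 →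
      (∫ z in (0:ℝ)..Lz, w (1, z)) = 0 →
      Real.sqrt (∫ y in (0:ℝ)..1, ∫ z in (0:ℝ)..Lz, (v (y, z)) ^ 2 + (w (y, z)) ^ 2)
        ≤ c₀ *
          (Real.sqrt (∫ y in (0:ℝ)..1, ∫ z in (0:ℝ)..Lz,
              (deriv (fun t => v (t, z)) y + deriv (fun t => w (y, t)) z) ^ 2)
           + Real.sqrt (∫ y in (0:ℝ)..1, ∫ z in (0:ℝ)..Lz,
              (deriv (fun t => w (t, z)) y - deriv (fun t => v (y, t)) z) ^ 2)) := by
  refine ⟨√(1 + Lz ^ 2), by positivity, fun v w hv hw hpv hpw hv0 hv1 hw0 _ => ?_⟩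
  -- `stripIntegral`, `partialFst` and `partialSnd` unfold to the integrals and `deriv`s above.
  have hdiv := stripIntegral_nonneg hLz.le fun p => sq_nonneg (partialFst v p + partialSnd w p)
  have hcurl := stripIntegral_nonneg hLz.le fun p => sq_nonneg (partialFst w p - partialSnd v p)
  calc √(stripIntegral Lz fun p => v p ^ 2 + w p ^ 2)
      ≤ √((1 + Lz ^ 2) * (stripIntegral Lz (fun p => (partialFst v p + partialSnd w p) ^ 2)
          + stripIntegral Lz (fun p => (partialFst w p - partialSnd v p) ^ 2))) :=
        Real.sqrt_le_sqrt (stripIntegral_sq_le_div_sq_add_curl_sq hLz hv hw hpv hpw hv0 hv1 hw0)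
    _ ≤ √(1 + Lz ^ 2) * (√(stripIntegral Lz fun p => (partialFst v p + partialSnd w p) ^ 2)
          + √(stripIntegral Lz fun p => (partialFst w p - partialSnd v p) ^ 2)) := by
        rw [Real.sqrt_mul (by positivity)]
        gcongr
        exact Real.sqrt_add_le_add_sqrt hdiv hcurl
end
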